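/- arXiv:1401.3611 — 5 statements merged into one kernel-verified Lean document; each statement's English description precedes it below -/
import Mathlib

section
/- There is a universal constant C > 0 such that for all real numbers u, v, the integral (1/π)·∫₀^π exp(−(u − v·cos s)²) ds is at most C / sqrt((|u + v| + 1)·(|u − v| + 1)). -/
/-!
Majorize `exp (-x²)` by `(1 + x²)⁻¹`. Since `cos (π - s) = -cos s`, folding `[0, π]` at `π / 2`
replaces `u, v` by `|u|, |v|` (which leaves `(|u + v| + 1) (|u - v| + 1)` unchanged) and
`[0, π]` by `[0, π / 2]`, where `h s = u - v cos s` is increasing with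
`h' = v sin s`. Put `D = |u - v| + 1`. On `[0, a]` with `a = √(D / v)` we have
`v (1 - cos s) ≤ D / 2`, which keeps `1 + h² ≳ D²`; on `[a, π / 2]` we have `h' ≥ v sin a ≳ √(v D)`,
and `∫ (1 + h²)⁻¹ ≤ π / min h'` because `arctan ∘ h` increases by less than `π`. Both pieces are
`O(1 / √(v D))`, and `(u + v + 1) D ≤ 4 v D`. When `D > 2 v` the whole of `[0, π / 2]` is a
near piece.
-/

open Real MeasureTheory

theorem Continuous.inv_one_add_sq {h : ℝ → ℝ} (hh : Continuous h) :
    Continuous fun s => (1 + h s ^ 2)⁻¹ :=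
  (continuous_const.add (hh.pow 2)).inv₀ fun s => (by positivity : (0 : ℝ) < 1 + h s ^ 2).ne'

lemma exp_neg_sq_le_inv_one_add_sq (x : ℝ) : exp (-x ^ 2) ≤ (1 + x ^ 2)⁻¹ := by
  rw [exp_neg]
  exact inv_anti₀ (by positivity) (by linarith [add_one_le_exp (x ^ 2)])

lemma le_div_sqrt_of_mul_le {x c p q : ℝ} (hq : 0 < q) (hp : 0 < p) (hpq : p ≤ q ^ 2)
    (hc : 0 ≤ c) (h : x * q ≤ c) : x ≤ c / √p :=
  calc x ≤ c / q := (le_div_iff₀ hq).2 h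
    _ ≤ c / √p := div_le_div_of_nonneg_left hc (sqrt_pos.2 hp) (sqrt_le_iff.2 ⟨hq.le, hpq⟩)

lemma abs_add_add_one_mul_abs_sub_add_one (u v : ℝ) :
    (|u + v| + 1) * (|u - v| + 1) = (|u| + |v| + 1) * (|(|u| - |v|)| + 1) := by
  grind

lemma inv_one_add_sq_sub_mul_le_abs (u v c : ℝ) (hc : 0 ≤ c) :
    (1 + (u - v * c) ^ 2)⁻¹ ≤ (1 + (|u| - |v| * c) ^ 2)⁻¹ := by
  refine inv_anti₀ (by positivity) (add_le_add_right (sq_le_sq.2 ?_) 1)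
  simpa [abs_mul, abs_of_nonneg hc] using abs_abs_sub_abs_le_abs_sub u (v * c)

lemma integral_inv_one_add_sq_le_pi_div {h h' : ℝ → ℝ} {a b m : ℝ} (hab : a ≤ b) (hm : 0 < m)
    (hderiv : ∀ s ∈ Set.Icc a b, HasDerivAt h (h' s) s) (hcont : ContinuousOn h' (Set.Icc a b))
    (hle : ∀ s ∈ Set.Icc a b, m ≤ h' s) :
    ∫ s in a..b, (1 + h s ^ 2)⁻¹ ≤ π / m := by
  rw [← Set.uIcc_of_le hab] at hderiv hcont
  have hh : ContinuousOn h (Set.uIcc a b) := fun s hs =>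
    (hderiv s hs).continuousAt.continuousWithinAt
  have hinv : ContinuousOn (fun s => (1 + h s ^ 2)⁻¹) (Set.uIcc a b) :=
    ((hh.pow 2).const_add 1).inv₀ fun s _ => (by positivity : (0 : ℝ) < 1 + h s ^ 2).ne'
  have harctan : ∀ s ∈ Set.uIcc a b,
      HasDerivAt (fun s => arctan (h s)) ((1 + h s ^ 2)⁻¹ * h' s) s :=
    fun s hs => (hasDerivAt_arctan' (h s)).comp s (hderiv s hs)
  have hint : IntervalIntegrable (fun s => (1 + h s ^ 2)⁻¹ * h' s) volume a b :=
    (hinv.mul hcont).intervalIntegrable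
  calc ∫ s in a..b, (1 + h s ^ 2)⁻¹ ≤ ∫ s in a..b, (1 + h s ^ 2)⁻¹ * h' s / m :=
        intervalIntegral.integral_mono_on hab hinv.intervalIntegrable (hint.div_const m)
          fun s hs => by
            rw [le_div_iff₀ hm]
            exact mul_le_mul_of_nonneg_left (hle s hs) (by positivity)
    _ = (arctan (h b) - arctan (h a)) / m := by
        rw [intervalIntegral.integral_div,
          intervalIntegral.integral_eq_sub_of_hasDerivAt harctan hint]
    _ ≤ π / m := by
        gcongr
        linarith [arctan_lt_pi_div_two (h b), neg_pi_div_two_lt_arctan (h a)]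

section

variable {u v : ℝ}

lemma continuous_inv_one_add_sq_sub_mul_cos (u v : ℝ) :
    Continuous fun s => (1 + (u - v * cos s) ^ 2)⁻¹ :=
  (continuous_const.sub (continuous_const.mul continuous_cos)).inv_one_add_sq

lemma integral_zero_pi_le_two_mul_integral_zero_pi_div_two (u v : ℝ) :
    ∫ s in 0..π, (1 + (u - v * cos s) ^ 2)⁻¹
      ≤ 2 * ∫ s in 0..π / 2, (1 + (|u| - |v| * cos s) ^ 2)⁻¹ := by
  have hcont := continuous_inv_one_add_sq_sub_mul_cos
  have hreflect : ∫ s in π / 2..π, (1 + (u - v * cos s) ^ 2)⁻¹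
      = ∫ s in 0..π / 2, (1 + (u - -v * cos s) ^ 2)⁻¹ := by
    simpa [cos_pi_sub, show π - π / 2 = π / 2 by ring] using
      (intervalIntegral.integral_comp_sub_left (a := 0) (b := π / 2)
        (fun s => (1 + (u - v * cos s) ^ 2)⁻¹) π).symm
  rw [← intervalIntegral.integral_add_adjacent_intervals
      ((hcont u v).intervalIntegrable 0 (π / 2)) ((hcont u v).intervalIntegrable _ _), hreflect,
    ← intervalIntegral.integral_add ((hcont u v).intervalIntegrable _ _)
      ((hcont u (-v)).intervalIntegrable _ _),
    ← intervalIntegral.integral_const_mul]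
  refine intervalIntegral.integral_mono_on (by positivity)
    (((hcont u v).add (hcont u (-v))).intervalIntegrable _ _)
    (((hcont |u| |v|).const_mul 2).intervalIntegrable _ _) fun s hs => ?_
  have hcos : 0 ≤ cos s := cos_nonneg_of_mem_Icc ⟨by linarith [hs.1, pi_pos], hs.2⟩
  have hminus := inv_one_add_sq_sub_mul_le_abs u v _ hcos
  have hplus := inv_one_add_sq_sub_mul_le_abs u (-v) _ hcos
  rw [abs_neg] at hplus
  linarith

lemma inv_one_add_sq_sub_mul_cos_le (hv : 0 ≤ v) {s : ℝ}
    (hs : v * (1 - cos s) ≤ (|u - v| + 1) / 2) :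
    (1 + (u - v * cos s) ^ 2)⁻¹ ≤ 12 / (|u - v| + 1) ^ 2 := by
  rw [inv_eq_one_div, div_le_div_iff₀ (by positivity) (by positivity)]
  have hcos : v * cos s ≤ v := by nlinarith [cos_le_one s]
  rcases le_total v u with huv | huv
  · rw [abs_of_nonneg (sub_nonneg.2 huv)]
    have := pow_le_pow_left₀ (sub_nonneg.2 huv) (show u - v ≤ u - v * cos s by linarith) 2
    nlinarith
  · rw [abs_of_nonpos (sub_nonpos.2 huv)] at hs ⊢
    rcases le_total (v - u) 1 with hd | hd
    · nlinarith
    · have := pow_le_pow_left₀ (by linarith)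
        (show (v - u - 1) / 2 ≤ v * cos s - u by linarith) 2
      nlinarith

lemma integral_zero_le_mul_of_one_sub_cos_le (hv : 0 ≤ v) {a : ℝ} (ha₀ : 0 ≤ a)
    (haπ : a ≤ π) (ha : v * (1 - cos a) ≤ (|u - v| + 1) / 2) :
    ∫ s in 0..a, (1 + (u - v * cos s) ^ 2)⁻¹ ≤ a * (12 / (|u - v| + 1) ^ 2) := by
  refine (intervalIntegral.integral_mono_on ha₀
    ((continuous_inv_one_add_sq_sub_mul_cos u v).intervalIntegrable _ _)
    intervalIntegrable_const fun s hs =>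
      inv_one_add_sq_sub_mul_cos_le hv <| (mul_le_mul_of_nonneg_left
        (by linarith [cos_le_cos_of_nonneg_of_le_pi hs.1 haπ hs.2]) hv).trans ha).trans_eq ?_
  rw [intervalIntegral.integral_const, smul_eq_mul, sub_zero]

lemma integral_pi_div_two_le_pi_div_mul_sin (hv : 0 < v) {a : ℝ} (ha₀ : 0 < a)
    (ha : a ≤ π / 2) :
    ∫ s in a..π / 2, (1 + (u - v * cos s) ^ 2)⁻¹ ≤ π / (v * sin a) :=
  integral_inv_one_add_sq_le_pi_div ha
    (mul_pos hv (sin_pos_of_pos_of_lt_pi ha₀ (by linarith [pi_pos])))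
    (fun s _ => by simpa using ((hasDerivAt_cos s).const_mul v).const_sub u)
    (continuous_const.mul continuous_sin).continuousOn
    fun s hs => mul_le_mul_of_nonneg_left
      (sin_le_sin_of_le_of_le_pi_div_two (by linarith [pi_pos]) hs.2 hs.1) hv.le

lemma integral_zero_pi_div_two_le (hu : 0 ≤ u) (hv : 0 ≤ v) :
    ∫ s in 0..π / 2, (1 + (u - v * cos s) ^ 2)⁻¹
      ≤ 40 / √((u + v + 1) * (|u - v| + 1)) := by
  set D := |u - v| + 1 with hD
  have hD1 : 1 ≤ D := by simp [hD]
  have hsum : u + v + 1 ≤ 2 * v + D := by linarith [le_abs_self (u - v)]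
  have hP : 0 < (u + v + 1) * D := by positivity
  rcases le_or_gt D (2 * v) with hDv | hDv
  · have hv₀ : 0 < v := by linarith
    set a := √(D / v) with ha
    have ha₀ : 0 < a := sqrt_pos.2 (by positivity)
    have hva : v * a ^ 2 = D := by rw [ha, sq_sqrt (by positivity)]; field_simp
    have ha2 : a ^ 2 ≤ 2 := by nlinarith
    have haπ : a ≤ π / 2 := by nlinarith [pi_gt_three]
    have hnear := integral_zero_le_mul_of_one_sub_cos_le hv ha₀.le (by linarith)
      (show v * (1 - cos a) ≤ D / 2 by nlinarith [one_sub_sq_div_two_le_cos (x := a)])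
    rw [← hD] at hnear
    have hfar := integral_pi_div_two_le_pi_div_mul_sin (u := u) hv₀ ha₀ haπ
    have hsin : 2 * a ≤ π * sin a := by
      have := mul_le_sin ha₀.le haπ
      rw [div_mul_eq_mul_div, div_le_iff₀ pi_pos] at this
      linarith
    have hsin₀ : 0 < sin a := sin_pos_of_pos_of_lt_pi ha₀ (by linarith [pi_pos])
    have hfar' : π / (v * sin a) ≤ π ^ 2 / (2 * v * a) := by
      rw [div_le_div_iff₀ (by positivity) (by positivity)]
      nlinarith [pi_pos, mul_le_mul_of_nonneg_left hsin (by positivity : 0 ≤ π * v)]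
    rw [← intervalIntegral.integral_add_adjacent_intervals
      ((continuous_inv_one_add_sq_sub_mul_cos u v).intervalIntegrable 0 a)
      ((continuous_inv_one_add_sq_sub_mul_cos u v).intervalIntegrable _ _)]
    apply le_div_sqrt_of_mul_le (q := 2 * v * a) (by positivity) hP (by nlinarith) (by norm_num)
    calc _ ≤ (a * (12 / D ^ 2) + π ^ 2 / (2 * v * a)) * (2 * v * a) := by gcongr; linarith
      _ = 24 * (v * a ^ 2) / D ^ 2 + π ^ 2 := by field_simp; ring
      _ ≤ 40 := by
        rw [hva, show 24 * D / D ^ 2 = 24 / D by field_simp]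
        nlinarith [pi_le_four, pi_pos, div_le_self (by norm_num : (0 : ℝ) ≤ 24) hD1]
  · have hnear := integral_zero_le_mul_of_one_sub_cos_le (u := u) hv (a := π / 2)
      (by positivity) (by linarith [pi_pos]) (by rw [cos_pi_div_two]; linarith)
    rw [← hD] at hnear
    apply le_div_sqrt_of_mul_le (q := 2 * D) (by positivity) hP (by nlinarith) (by norm_num)
    calc _ ≤ π / 2 * (12 / D ^ 2) * (2 * D) := by gcongr
      _ = 12 * π / D := by field_simp
      _ ≤ 40 := by
        rw [div_le_iff₀ (by positivity)]
        nlinarith [pi_lt_d2]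

end

/-- There is a universal constant C > 0 such that for all u, v ∈ ℝ,
(1/π)·∫₀^π exp(−(u − v·cos s)²) ds ≤ C / √((|u+v|+1)(|u−v|+1)). -/
theorem exists_const_integral_exp_le :
    ∃ C : ℝ, 0 < C ∧ ∀ u v : ℝ,
      (1 / π) * ∫ s in (0:ℝ)..π, Real.exp (-(u - v * Real.cos s) ^ 2)
        ≤ C / Real.sqrt ((|u + v| + 1) * (|u - v| + 1)) := by
  refine ⟨80 / π, by positivity, fun u v => ?_⟩
  have hexp : ∫ s in (0:ℝ)..π, exp (-(u - v * cos s) ^ 2)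
      ≤ ∫ s in (0:ℝ)..π, (1 + (u - v * cos s) ^ 2)⁻¹ :=
    intervalIntegral.integral_mono_on pi_pos.le
      ((by fun_prop : Continuous fun s => exp (-(u - v * cos s) ^ 2)).intervalIntegrable _ _)
      ((continuous_inv_one_add_sq_sub_mul_cos u v).intervalIntegrable _ _)
      fun s _ => exp_neg_sq_le_inv_one_add_sq _
  have hfold := integral_zero_pi_le_two_mul_integral_zero_pi_div_two u v
  have hhalf := integral_zero_pi_div_two_le (abs_nonneg u) (abs_nonneg v)
  rw [← abs_add_add_one_mul_abs_sub_add_one] at hhalf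
  calc (1 / π) * ∫ s in (0:ℝ)..π, exp (-(u - v * cos s) ^ 2)
      ≤ (1 / π) * (2 * (40 / √((|u + v| + 1) * (|u - v| + 1)))) := by
        gcongr
        linarith
    _ = 80 / π / √((|u + v| + 1) * (|u - v| + 1)) := by ring
end

section
/- For all real numbers u, v ≥ 0 with v ≥ 1 and u ≥ v, the integral (1/π)·∫₀^π exp(−(u − v·cos s)²) ds is at most exp(−(u − v)²)/sqrt(2v). -/
open Real MeasureTheory

/-!
On `[0, π]` we have `1 - cos s ≥ 2 s² / π²`, so writing `u - v cos s = (u - v) + v (1 - cos s)`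
with both summands nonnegative gives `(u - v cos s)² ≥ (u - v)² + (c s)⁴` for `c = √(2v) / π`.
Hence the integral is at most `exp (-(u - v)²) / c` times `∫₀^∞ exp (-t⁴) dt = Γ(5/4)`,
and `Γ ≤ 1` on `[1, 2]` by convexity.
-/

theorem Real.Gamma_le_one_of_mem_Icc {x : ℝ} (hx : x ∈ Set.Icc 1 2) : Gamma x ≤ 1 := by
  simpa [Gamma_one, Gamma_two] using
    convexOn_Gamma.le_max_of_mem_Icc (by norm_num : (1 : ℝ) ∈ Set.Ioi 0)
      (by norm_num : (2 : ℝ) ∈ Set.Ioi 0) hx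

theorem intervalIntegral_exp_neg_rpow_le_Gamma {p A : ℝ} (hp : 0 < p) (hA : 0 ≤ A) :
    ∫ t in (0 : ℝ)..A, exp (-t ^ p) ≤ Gamma (1 / p + 1) := by
  have hint : IntegrableOn (fun t : ℝ => exp (-t ^ p)) (Set.Ioi 0) := by
    simpa using integrableOn_rpow_mul_exp_neg_rpow neg_one_lt_zero hp
  rw [intervalIntegral.integral_of_le hA, ← integral_exp_neg_rpow hp]
  exact setIntegral_mono_set hint (Filter.Eventually.of_forall fun t => (exp_pos _).le)
    Set.Ioc_subset_Ioi_self.eventuallyLE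

theorem intervalIntegral_exp_neg_pow_four_le_one {A : ℝ} (hA : 0 ≤ A) :
    ∫ t in (0 : ℝ)..A, exp (-t ^ 4) ≤ 1 := by
  have h := intervalIntegral_exp_neg_rpow_le_Gamma (p := 4) (by norm_num) hA
  simp only [rpow_ofNat] at h
  exact h.trans (Gamma_le_one_of_mem_Icc ⟨by norm_num, by norm_num⟩)

theorem intervalIntegral_exp_neg_mul_pow_four_le_inv {c b : ℝ} (hc : 0 < c) (hb : 0 ≤ b) :
    ∫ s in (0 : ℝ)..b, exp (-(c * s) ^ 4) ≤ c⁻¹ := by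
  rw [intervalIntegral.integral_comp_mul_left (fun t => exp (-t ^ 4)) hc.ne', mul_zero,
    smul_eq_mul]
  simpa using mul_le_mul_of_nonneg_left
    (intervalIntegral_exp_neg_pow_four_le_one (mul_nonneg hc.le hb)) (inv_nonneg.2 hc.le)

theorem sq_add_sq_le_sq_sub_mul_cos {u v s : ℝ} (hv : 0 ≤ v) (huv : v ≤ u) (hs : |s| ≤ π) :
    (u - v) ^ 2 + (2 * v / π ^ 2 * s ^ 2) ^ 2 ≤ (u - v * cos s) ^ 2 := by
  have hgap : 2 * v / π ^ 2 * s ^ 2 ≤ v * (1 - cos s) :=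
    calc 2 * v / π ^ 2 * s ^ 2 = v * (1 - (1 - 2 / π ^ 2 * s ^ 2)) := by ring
      _ ≤ v * (1 - cos s) := by gcongr; exact cos_le_one_sub_mul_cos_sq hs
  have hw : 0 ≤ 2 * v / π ^ 2 * s ^ 2 := by positivity
  have hab : u - v * cos s = (u - v) + v * (1 - cos s) := by ring
  rw [hab]
  nlinarith [mul_nonneg (sub_nonneg.2 huv) (hw.trans hgap)]

theorem integral_exp_le_of_le_general (u v : ℝ) (hv : 1 ≤ v) (huv : v ≤ u) :
    (1 / π) * ∫ s in (0:ℝ)..π, Real.exp (-(u - v * Real.cos s) ^ 2)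
      ≤ Real.exp (-(u - v) ^ 2) / Real.sqrt (2 * v) := by
  have hv0 : 0 < v := by linarith
  set c := √(2 * v) / π
  have hc : 0 < c := by positivity
  have hpoint : ∀ s ∈ Set.Icc 0 π,
      exp (-(u - v * cos s) ^ 2) ≤ exp (-(u - v) ^ 2) * exp (-(c * s) ^ 4) := by
    intro s hs
    have hcs : (c * s) ^ 4 = (2 * v / π ^ 2 * s ^ 2) ^ 2 := by
      rw [show (c * s) ^ 4 = (c ^ 2 * s ^ 2) ^ 2 by ring, div_pow, sq_sqrt (by positivity)]
    rw [← exp_add, exp_le_exp, hcs]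
    linarith [sq_add_sq_le_sq_sub_mul_cos hv0.le huv (abs_le.2 ⟨by linarith [hs.1, pi_pos], hs.2⟩)]
  have hint : ∫ s in (0:ℝ)..π, exp (-(u - v * cos s) ^ 2) ≤ exp (-(u - v) ^ 2) * c⁻¹ := by
    calc ∫ s in (0:ℝ)..π, exp (-(u - v * cos s) ^ 2)
        ≤ ∫ s in (0:ℝ)..π, exp (-(u - v) ^ 2) * exp (-(c * s) ^ 4) :=
          intervalIntegral.integral_mono_on pi_pos.le
            (Continuous.intervalIntegrable (by fun_prop) _ _)
            (Continuous.intervalIntegrable (by fun_prop) _ _) hpoint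
      _ = exp (-(u - v) ^ 2) * ∫ s in (0:ℝ)..π, exp (-(c * s) ^ 4) :=
          intervalIntegral.integral_const_mul _ _
      _ ≤ exp (-(u - v) ^ 2) * c⁻¹ := by
          gcongr; exact intervalIntegral_exp_neg_mul_pow_four_le_inv hc pi_pos.le
  calc (1 / π) * ∫ s in (0:ℝ)..π, exp (-(u - v * cos s) ^ 2)
      ≤ (1 / π) * (exp (-(u - v) ^ 2) * c⁻¹) := by gcongr
    _ = exp (-(u - v) ^ 2) / √(2 * v) := by rw [inv_div]; field_simp

/-- For all real u, v with v ≥ 1 and u ≥ v (hence u, v ≥ 0),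
(1/π)·∫₀^π exp(−(u − v·cos s)²) ds ≤ exp(−(u−v)²)/√(2v). -/
theorem integral_exp_le_of_le (u v : ℝ) (hv0 : 0 ≤ v) (hu0 : 0 ≤ u) (hv : 1 ≤ v)
    (huv : v ≤ u) :
    (1 / π) * ∫ s in (0:ℝ)..π, Real.exp (-(u - v * Real.cos s) ^ 2)
      ≤ Real.exp (-(u - v) ^ 2) / Real.sqrt (2 * v) :=
  integral_exp_le_of_le_general u v hv huv
end

section
/- Let a, d ≥ 0 and c ∈ ℝ, and suppose not both a = 0 and d = 0. Then there exist λ, μ ≥ 0 and φ ∈ [−π/4, π/4] with λμ = ad + c², λ − μ = a − d, and tan(2φ) = 2c/(a + d), such that the 2×2 real matrix with rows (a, −c) and (c, d) equals r_φ · diag(λ, μ) · r_φ, where r_φ is the rotation matrix with rows (cos φ, −sin φ) and (sin φ, cos φ). -/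
/-!
With `t = a + d > 0` and `S = √(t² + 4c²)`, choose `2φ = arctan (2c / t)`, so that
`S cos 2φ = t` and `S sin 2φ = 2c`, and `λ, μ = (S ± (a - d)) / 2`. Conjugating
`diag(λ, μ)` by rotations gives a matrix whose entries are affine in `(λ + μ) cos 2φ`,
`(λ + μ) sin 2φ` and `λ - μ`, which are `t`, `2c` and `a - d`. Nonnegativity of `λ, μ` is
`|a - d| ≤ S`, i.e. `4ad + 4c² ≥ 0`.
-/

open Real Matrix

lemma rotation_mul_diagonal_mul_rotation (φ l m : ℝ) :
    !![cos φ, -sin φ; sin φ, cos φ] * diagonal ![l, m] * !![cos φ, -sin φ; sin φ, cos φ] =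
      !![(l + m) / 2 * cos (2 * φ) + (l - m) / 2, -((l + m) / 2 * sin (2 * φ));
        (l + m) / 2 * sin (2 * φ), (l + m) / 2 * cos (2 * φ) - (l - m) / 2] := by
  rw [diagonal_vec2, mul_fin_two, mul_fin_two, cos_two_mul', sin_two_mul]
  ext i j
  fin_cases i <;> fin_cases j <;> simp only [Fin.zero_eta, Fin.mk_one, of_apply, cons_val',
    cons_val_zero, cons_val_one, empty_val', cons_val_fin_one]
  · linear_combination (l - m) / 2 * cos_sq_add_sin_sq φ
  · ring
  · ring
  · linear_combination -(l - m) / 2 * cos_sq_add_sin_sq φ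

lemma rotation_mul_diagonal_mul_rotation_eq {a d c S φ : ℝ} (hcos : S * cos (2 * φ) = a + d)
    (hsin : S * sin (2 * φ) = 2 * c) :
    !![cos φ, -sin φ; sin φ, cos φ] * diagonal ![(S + (a - d)) / 2, (S - (a - d)) / 2] *
      !![cos φ, -sin φ; sin φ, cos φ] = !![a, -c; c, d] := by
  rw [rotation_mul_diagonal_mul_rotation]
  ext i j
  fin_cases i <;> fin_cases j <;> simp only [Fin.zero_eta, Fin.mk_one, of_apply, cons_val',
    cons_val_zero, cons_val_one, empty_val', cons_val_fin_one] <;> linarith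

lemma sqrt_one_add_div_sq {t : ℝ} (ht : 0 < t) (y : ℝ) :
    √(1 + (y / t) ^ 2) = √(t ^ 2 + y ^ 2) / t := by
  rw [show 1 + (y / t) ^ 2 = (t ^ 2 + y ^ 2) / t ^ 2 by field_simp,
    sqrt_div' _ (sq_nonneg t), sqrt_sq ht.le]

lemma cos_arctan_div {t : ℝ} (ht : 0 < t) (y : ℝ) :
    cos (arctan (y / t)) = t / √(t ^ 2 + y ^ 2) := by
  rw [cos_arctan, sqrt_one_add_div_sq ht, one_div_div]

lemma sin_arctan_div {t : ℝ} (ht : 0 < t) (y : ℝ) :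
    sin (arctan (y / t)) = y / √(t ^ 2 + y ^ 2) := by
  rw [sin_arctan, sqrt_one_add_div_sq ht, div_div_div_cancel_right₀ ht.ne']

lemma abs_sub_le_sqrt_add_sq {a d : ℝ} (ha : 0 ≤ a) (hd : 0 ≤ d) (y : ℝ) :
    |a - d| ≤ √((a + d) ^ 2 + y ^ 2) :=
  abs_le_sqrt (by nlinarith [mul_nonneg ha hd, sq_nonneg y])

/-- For a, d ≥ 0 and c ∈ ℝ, not both a and d zero, the matrix (a, −c; c, d)
can be written as r_φ · diag(λ, μ) · r_φ with λ, μ ≥ 0, φ ∈ [−π/4, π/4],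
λμ = ad + c², λ − μ = a − d and tan(2φ) = 2c/(a+d). -/
theorem polar_decomposition_in_SL2_general (a d c : ℝ) (ha : 0 ≤ a) (hd : 0 ≤ d)
    (h : ¬(a = 0 ∧ d = 0)) :
    ∃ lam mu φ : ℝ, 0 ≤ lam ∧ 0 ≤ mu ∧ φ ∈ Set.Icc (-(π / 4)) (π / 4) ∧
      lam * mu = a * d + c ^ 2 ∧ lam - mu = a - d ∧
      Real.tan (2 * φ) = 2 * c / (a + d) ∧
      !![a, -c; c, d] =
        !![Real.cos φ, -Real.sin φ; Real.sin φ, Real.cos φ] *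
          Matrix.diagonal ![lam, mu] *
          !![Real.cos φ, -Real.sin φ; Real.sin φ, Real.cos φ] := by
  have ht : 0 < a + d :=
    (add_nonneg ha hd).lt_of_ne fun h0 => h ⟨by linarith, by linarith⟩
  set S := √((a + d) ^ 2 + (2 * c) ^ 2)
  have hSsq : S ^ 2 = (a + d) ^ 2 + (2 * c) ^ 2 := sq_sqrt (by positivity)
  have hS : 0 < S := sqrt_pos.mpr (by positivity)
  have hS_ge : |a - d| ≤ S := abs_sub_le_sqrt_add_sq ha hd (2 * c)
  set θ := arctan (2 * c / (a + d))
  have hθ : 2 * (θ / 2) = θ := by ring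
  refine ⟨(S + (a - d)) / 2, (S - (a - d)) / 2, θ / 2,
    by linarith [neg_abs_le (a - d)], by linarith [le_abs_self (a - d)],
    ⟨by linarith [neg_pi_div_two_lt_arctan (2 * c / (a + d))],
      by linarith [arctan_lt_pi_div_two (2 * c / (a + d))]⟩,
    by linear_combination hSsq / 4, by ring, by rw [hθ, tan_arctan],
    (rotation_mul_diagonal_mul_rotation_eq ?_ ?_).symm⟩
  · rw [hθ, cos_arctan_div ht, mul_div_cancel₀ _ hS.ne']
  · rw [hθ, sin_arctan_div ht, mul_div_cancel₀ _ hS.ne']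
end

section
/- Let α > 0 and θ ∈ [−π/2, π/2]. Then there exist β ≥ 0 and φ ∈ [−π/4, π/4] with sinh β = sinh(2α)·cos θ and tan(2φ) = tan θ / cosh(2α) such that diag(e^α, e^{−α}) · r_θ · diag(e^α, e^{−α}) = r_φ · diag(e^β, e^{−β}) · r_φ, where r_θ is the 2×2 rotation matrix by angle θ. -/
/-!
Write `J = diag(1, -1)` and `K = r_{π/2}`. Since `D = diag(e^α, e^{-α})` has determinant one,
`D K D = K`, so `D r_θ D = cosh(2α) cos θ · 1 + sin θ · K + sinh(2α) cos θ · J`.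
On the other side `r_φ J r_φ = J`, so `r_φ diag(e^β, e^{-β}) r_φ = cosh β · r_{2φ} + sinh β · J`.
Matching the `J`-parts fixes `β`; then `(cosh(2α) cos θ, sin θ)` has length `cosh β` and
nonnegative first coordinate, so `2φ` is its argument, which lies in `[-π/2, π/2]`.
-/

open Real Matrix

theorem diagonal_exp_mul_rotation_mul_diagonal_exp (α θ : ℝ) :
    diagonal ![exp α, exp (-α)] * !![cos θ, -sin θ; sin θ, cos θ] *
        diagonal ![exp α, exp (-α)] =
      !![cosh (2 * α) * cos θ + sinh (2 * α) * cos θ, -sin θ;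
        sin θ, cosh (2 * α) * cos θ - sinh (2 * α) * cos θ] := by
  have hexp_two_mul : exp α * exp α = cosh (2 * α) + sinh (2 * α) := by
    rw [← exp_add, cosh_add_sinh, two_mul]
  have hexp_neg_two_mul : exp (-α) * exp (-α) = cosh (2 * α) - sinh (2 * α) := by
    rw [← exp_add, cosh_sub_sinh, two_mul, neg_add]
  have hexp_mul_exp_neg : exp α * exp (-α) = 1 := by rw [← exp_add, add_neg_cancel, exp_zero]
  rw [diagonal_vec2, mul_fin_two, mul_fin_two]
  ext i j
  fin_cases i <;> fin_cases j <;> simp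
  · linear_combination cos θ * hexp_two_mul
  · linear_combination sin θ * hexp_mul_exp_neg
  · linear_combination sin θ * hexp_mul_exp_neg
  · linear_combination cos θ * hexp_neg_two_mul

theorem rotation_mul_diagonal_exp_mul_rotation (β φ : ℝ) :
    !![cos φ, -sin φ; sin φ, cos φ] * diagonal ![exp β, exp (-β)] *
        !![cos φ, -sin φ; sin φ, cos φ] =
      !![cosh β * cos (2 * φ) + sinh β, -(cosh β * sin (2 * φ));
        cosh β * sin (2 * φ), cosh β * cos (2 * φ) - sinh β] := by
  have hexp : exp β = cosh β + sinh β := (cosh_add_sinh β).symm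
  have hexp_neg : exp (-β) = cosh β - sinh β := (cosh_sub_sinh β).symm
  rw [diagonal_vec2, mul_fin_two, mul_fin_two, sin_two_mul, cos_two_mul]
  ext i j
  fin_cases i <;> fin_cases j <;> simp
  · linear_combination cos φ ^ 2 * hexp - sin φ ^ 2 * hexp_neg +
      (sinh β - cosh β) * sin_sq_add_cos_sq φ
  · linear_combination -(cos φ * sin φ) * (hexp + hexp_neg)
  · linear_combination cos φ * sin φ * (hexp + hexp_neg)
  · linear_combination -sin φ ^ 2 * hexp + cos φ ^ 2 * hexp_neg -
      (cosh β + sinh β) * sin_sq_add_cos_sq φ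

theorem Complex.norm_mk_cosh_mul_cos_sin (x θ : ℝ) :
    ‖(⟨Real.cosh x * Real.cos θ, Real.sin θ⟩ : ℂ)‖ =
      Real.cosh (arsinh (Real.sinh x * Real.cos θ)) := by
  rw [Complex.norm_def, Complex.normSq_mk, cosh_arsinh]
  congr 1
  linear_combination Real.cos θ ^ 2 * Real.cosh_sq x + Real.sin_sq_add_cos_sq θ

/-- For α > 0 and θ ∈ [−π/2, π/2], there are β ≥ 0 and φ ∈ [−π/4, π/4] with
sinh β = sinh(2α)·cos θ and tan(2φ) = tan θ / cosh(2α) (with the convention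
2φ = ±π/2 for θ = ±π/2) such that
diag(e^α, e^{−α}) · r_θ · diag(e^α, e^{−α}) = r_φ · diag(e^β, e^{−β}) · r_φ. -/
theorem polar_decomposition_in_SL2 (α θ : ℝ) (hα : 0 < α)
    (hθ : θ ∈ Set.Icc (-(π / 2)) (π / 2)) :
    ∃ β φ : ℝ, 0 ≤ β ∧ φ ∈ Set.Icc (-(π / 4)) (π / 4) ∧
      Real.sinh β = Real.sinh (2 * α) * Real.cos θ ∧
      ((|θ| < π / 2 → Real.tan (2 * φ) = Real.tan θ / Real.cosh (2 * α)) ∧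
        (θ = π / 2 → φ = π / 4) ∧ (θ = -(π / 2) → φ = -(π / 4))) ∧
      Matrix.diagonal ![Real.exp α, Real.exp (-α)] *
          !![Real.cos θ, -Real.sin θ; Real.sin θ, Real.cos θ] *
          Matrix.diagonal ![Real.exp α, Real.exp (-α)] =
        !![Real.cos φ, -Real.sin φ; Real.sin φ, Real.cos φ] *
          Matrix.diagonal ![Real.exp β, Real.exp (-β)] *
          !![Real.cos φ, -Real.sin φ; Real.sin φ, Real.cos φ] := by
  have hcos : 0 ≤ cos θ := cos_nonneg_of_mem_Icc hθ
  set β := arsinh (sinh (2 * α) * cos θ)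
  set z : ℂ := ⟨cosh (2 * α) * cos θ, sin θ⟩
  have hnorm : ‖z‖ = cosh β := Complex.norm_mk_cosh_mul_cos_sin (2 * α) θ
  have hre : 0 ≤ z.re := mul_nonneg (cosh_pos _).le hcos
  have harg : 2 * (z.arg / 2) = z.arg := mul_div_cancel₀ _ two_ne_zero
  refine ⟨β, z.arg / 2, arsinh_nonneg_iff.2 (mul_nonneg (sinh_nonneg_iff.2 (by linarith)) hcos),
    ?_, sinh_arsinh _, ⟨fun _ ↦ ?_, fun hθ ↦ ?_, fun hθ ↦ ?_⟩, ?_⟩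
  · have := abs_le.1 (Complex.abs_arg_le_pi_div_two_iff.2 hre)
    constructor <;> linarith
  · -- no case split at `cos θ = 0`: there both sides take the junk value `x / 0 = 0`
    rw [harg, Complex.tan_arg, tan_eq_sin_div_cos, div_div, mul_comm]
  · have hz : z = Complex.I := Complex.ext (by simp [z, hθ]) (by simp [z, hθ])
    rw [hz, Complex.arg_I]; ring
  · have hz : z = -Complex.I := Complex.ext (by simp [z, hθ]) (by simp [z, hθ])
    rw [hz, Complex.arg_neg_I]; ring
  · rw [diagonal_exp_mul_rotation_mul_diagonal_exp, rotation_mul_diagonal_exp_mul_rotation, harg,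
      ← hnorm, Complex.norm_mul_cos_arg, Complex.norm_mul_sin_arg, sinh_arsinh]
end

section
/- For α > 0 and θ ∈ [−π/2, π/2], let X = D(α, 0)·ι(u_θ)·D(α, 0) in Sp(2, ℝ), where D(α, 0) = diag(e^α, 1, e^{−α}, 1) and u_θ = (1/√2)·(e^{iθ}, −1; 1, e^{−iθ}) ∈ SU(2). If β ≥ γ ≥ 0 are such that X ∈ K·D(β, γ)·K (the KAK decomposition), then sinh β · sinh γ = (1/2)·sinh²(α) and sinh β − sinh γ = (1/√2)·sinh(2α)·cos θ. -/
/-!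
Let `S(X) = ½ (X − X⁻ᵀ)`. For orthogonal `k₁, k₂` one has `S(k₁ A k₂) = k₁ S(A) k₂`, and
`S(D(β, γ)) = diag(sinh β, sinh γ, −sinh β, −sinh γ)`, so the orthogonal invariants `det S(X)²`
and `tr(S(X)ᵀ S(X))` of the right-hand side are `(sinh β sinh γ)⁴` and `2 (sinh² β + sinh² γ)`.
On the other side `D(α, 0)` is symmetric and `ι(u_θ)` orthogonal, so
`X⁻ᵀ = D(−α, 0) ι(u_θ) D(−α, 0)`, and `S(X)` is `1/√2` times the block-diagonal matrix with blocks
`B` and `−B`, where `B = (cos θ sinh 2α, −sinh α; sinh α, 0)`. Comparing the invariants gives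
`sinh β sinh γ = ½ sinh² α` and `(sinh β − sinh γ)² = ½ cos² θ sinh² 2α`, and the sign
conditions select the nonnegative roots.
-/

open Matrix Real

/-- ι : M₂(ℂ) → M₄(ℝ), ι(A + iB) = (A, −B; B, A). -/
noncomputable def iota (X : Matrix (Fin 2) (Fin 2) ℂ) : Matrix (Fin 4) (Fin 4) ℝ :=
  Matrix.reindex (finSumFinEquiv : Fin 2 ⊕ Fin 2 ≃ Fin 4) (finSumFinEquiv : Fin 2 ⊕ Fin 2 ≃ Fin 4)
    (Matrix.fromBlocks (X.map Complex.re) (-(X.map Complex.im))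
      (X.map Complex.im) (X.map Complex.re))

/-- D(β,γ) = diag(e^β, e^γ, e^{−β}, e^{−γ}). -/
noncomputable def Dmat (β γ : ℝ) : Matrix (Fin 4) (Fin 4) ℝ :=
  Matrix.diagonal ![Real.exp β, Real.exp γ, Real.exp (-β), Real.exp (-γ)]

/-- K = ι(U(2)). -/
noncomputable def Kgrp : Set (Matrix (Fin 4) (Fin 4) ℝ) :=
  iota '' {X | X ∈ Matrix.unitaryGroup (Fin 2) ℂ}

/-- u_θ = (1/√2)·(e^{iθ}, −1; 1, e^{−iθ}) ∈ SU(2). -/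
noncomputable def umat (θ : ℝ) : Matrix (Fin 2) (Fin 2) ℂ :=
  ((1 / Real.sqrt 2 : ℝ) : ℂ) •
    !![Complex.exp (Complex.I * θ), -1; 1, Complex.exp (-(Complex.I * θ))]

namespace Matrix

variable {n : Type*} [Fintype n]

theorem map_re_mul (X Y : Matrix n n ℂ) :
    (X * Y).map Complex.re =
      X.map Complex.re * Y.map Complex.re - X.map Complex.im * Y.map Complex.im := by
  ext i j
  simp [mul_apply, Complex.re_sum, Complex.mul_re, Finset.sum_sub_distrib]

theorem map_im_mul (X Y : Matrix n n ℂ) :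
    (X * Y).map Complex.im =
      X.map Complex.re * Y.map Complex.im + X.map Complex.im * Y.map Complex.re := by
  ext i j
  simp [mul_apply, Complex.im_sum, Complex.mul_im, Finset.sum_add_distrib]

variable [DecidableEq n] {R : Type*} [Field R]

noncomputable def sinhPart (X : Matrix n n R) : Matrix n n R :=
  (2⁻¹ : R) • (X - X⁻¹ᵀ)

theorem inv_transpose_eq_of_transpose_mul_eq_one {X Y : Matrix n n R} (h : Xᵀ * Y = 1) :
    X⁻¹ᵀ = Y := by
  rw [inv_eq_left_inv (B := Yᵀ) (by simpa using congrArg transpose h), transpose_transpose]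

theorem sinhPart_eq_of_transpose_mul_eq_one {X Y : Matrix n n R} (h : Xᵀ * Y = 1) :
    sinhPart X = (2⁻¹ : R) • (X - Y) := by
  rw [sinhPart, inv_transpose_eq_of_transpose_mul_eq_one h]

theorem transpose_mul_eq_one_of_orthogonal {k₁ k₂ A B : Matrix n n R}
    (hk₁ : k₁ ∈ orthogonalGroup n R) (hk₂ : k₂ ∈ orthogonalGroup n R) (h : Aᵀ * B = 1) :
    (k₁ * A * k₂)ᵀ * (k₁ * B * k₂) = 1 := by
  rw [mem_orthogonalGroup_iff'] at hk₁
  rw [mem_orthogonalGroup_iff'] at hk₂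
  simp only [transpose_mul, Matrix.mul_assoc]
  rw [← Matrix.mul_assoc k₁ᵀ, hk₁, Matrix.one_mul, ← Matrix.mul_assoc Aᵀ, h, Matrix.one_mul, hk₂]

theorem trace_transpose_mul_self_orthogonal {k₁ k₂ A : Matrix n n R}
    (hk₁ : k₁ ∈ orthogonalGroup n R) (hk₂ : k₂ ∈ orthogonalGroup n R) :
    ((k₁ * A * k₂)ᵀ * (k₁ * A * k₂)).trace = (Aᵀ * A).trace := by
  rw [mem_orthogonalGroup_iff'] at hk₁
  rw [mem_orthogonalGroup_iff] at hk₂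
  have : (k₁ * A * k₂)ᵀ * (k₁ * A * k₂) = k₂ᵀ * (Aᵀ * A) * k₂ := by
    simp only [transpose_mul, Matrix.mul_assoc]
    rw [← Matrix.mul_assoc k₁ᵀ, hk₁, Matrix.one_mul]
  rw [this, trace_mul_cycle, hk₂, Matrix.one_mul]

theorem det_sq_of_mem_orthogonalGroup {k : Matrix n n R} (hk : k ∈ orthogonalGroup n R) :
    k.det ^ 2 = 1 := by
  rw [mem_orthogonalGroup_iff'] at hk
  rw [sq]
  nth_rw 1 [← det_transpose]
  rw [← det_mul, hk, det_one]

theorem det_sq_orthogonal_mul {k₁ k₂ A : Matrix n n R}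
    (hk₁ : k₁ ∈ orthogonalGroup n R) (hk₂ : k₂ ∈ orthogonalGroup n R) :
    (k₁ * A * k₂).det ^ 2 = A.det ^ 2 := by
  rw [det_mul, det_mul, mul_pow, mul_pow, det_sq_of_mem_orthogonalGroup hk₁,
    det_sq_of_mem_orthogonalGroup hk₂, one_mul, mul_one]

theorem sinhPart_orthogonal_mul {k₁ k₂ A : Matrix n n R}
    (hk₁ : k₁ ∈ orthogonalGroup n R) (hk₂ : k₂ ∈ orthogonalGroup n R) (hA : IsUnit A.det) :
    sinhPart (k₁ * A * k₂) = k₁ * sinhPart A * k₂ := by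
  have hAinv : Aᵀ * A⁻¹ᵀ = 1 := by rw [← transpose_mul, nonsing_inv_mul A hA, transpose_one]
  rw [sinhPart_eq_of_transpose_mul_eq_one (transpose_mul_eq_one_of_orthogonal hk₁ hk₂ hAinv),
    sinhPart, Matrix.mul_smul, Matrix.smul_mul, Matrix.mul_sub, Matrix.sub_mul]

end Matrix

theorem iota_mul (X Y : Matrix (Fin 2) (Fin 2) ℂ) : iota (X * Y) = iota X * iota Y := by
  simp only [iota, reindex_apply, submatrix_mul_equiv, fromBlocks_multiply, map_re_mul, map_im_mul,
    Matrix.neg_mul, Matrix.mul_neg]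
  congr 2 <;> abel

theorem iota_conjTranspose (X : Matrix (Fin 2) (Fin 2) ℂ) : iota Xᴴ = (iota X)ᵀ := by
  have hre : Xᴴ.map Complex.re = (X.map Complex.re)ᵀ := by ext; simp
  have him : Xᴴ.map Complex.im = -(X.map Complex.im)ᵀ := by ext; simp
  simp [iota, hre, him, transpose_submatrix, fromBlocks_transpose]

theorem iota_one : iota 1 = 1 := by
  have hre : (1 : Matrix (Fin 2) (Fin 2) ℂ).map Complex.re = 1 := by
    ext i j; by_cases h : i = j <;> simp [one_apply, h]
  have him : (1 : Matrix (Fin 2) (Fin 2) ℂ).map Complex.im = 0 := by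
    ext i j; by_cases h : i = j <;> simp [one_apply, h]
  simp [iota, hre, him]

theorem iota_mem_orthogonalGroup {U : Matrix (Fin 2) (Fin 2) ℂ}
    (hU : U ∈ unitaryGroup (Fin 2) ℂ) :
    iota U ∈ orthogonalGroup (Fin 4) ℝ := by
  rw [mem_orthogonalGroup_iff', ← iota_conjTranspose, ← iota_mul, ← star_eq_conjTranspose,
    (mem_unitaryGroup_iff').1 hU, iota_one]

theorem Kgrp_subset_orthogonalGroup : Kgrp ⊆ orthogonalGroup (Fin 4) ℝ := by
  rintro _ ⟨U, hU, rfl⟩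
  exact iota_mem_orthogonalGroup hU

theorem Dmat_transpose (β γ : ℝ) : (Dmat β γ)ᵀ = Dmat β γ := diagonal_transpose _

theorem Dmat_mul_Dmat_neg (β γ : ℝ) : Dmat β γ * Dmat (-β) (-γ) = 1 := by
  rw [Dmat, Dmat, diagonal_mul_diagonal, ← diagonal_one]
  congr 1
  ext i
  fin_cases i <;> simp [← Real.exp_add]

theorem isUnit_det_Dmat (β γ : ℝ) : IsUnit (Dmat β γ).det :=
  isUnit_det_of_right_inverse (Dmat_mul_Dmat_neg β γ)

noncomputable def sinhDiag (β γ : ℝ) : Matrix (Fin 4) (Fin 4) ℝ :=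
  diagonal ![sinh β, sinh γ, -sinh β, -sinh γ]

theorem sinhPart_Dmat (β γ : ℝ) : sinhPart (Dmat β γ) = sinhDiag β γ := by
  have h : (Dmat β γ)ᵀ * Dmat (-β) (-γ) = 1 := by rw [Dmat_transpose, Dmat_mul_Dmat_neg]
  rw [sinhPart_eq_of_transpose_mul_eq_one h]
  ext i j
  fin_cases i <;> fin_cases j <;> simp [Dmat, sinhDiag, Real.sinh_eq] <;> ring

theorem iota_fin_two_of (a b c d : ℂ) : iota !![a, b; c, d] =
    !![a.re, b.re, -a.im, -b.im;
       c.re, d.re, -c.im, -d.im;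
       a.im, b.im, a.re, b.re;
       c.im, d.im, c.re, d.re] := by
  ext i j
  fin_cases i <;> fin_cases j <;> rfl

theorem iota_umat (θ : ℝ) : iota (umat θ) =
    (√2)⁻¹ • !![cos θ, -1, -sin θ, 0;
                1, cos θ, 0, sin θ;
                sin θ, 0, cos θ, -1;
                0, -sin θ, 1, cos θ] := by
  simp only [umat, smul_of, smul_cons, smul_empty, iota_fin_two_of]
  ext i j
  fin_cases i <;> fin_cases j <;>
    simp [Complex.exp_re, Complex.exp_im, Real.sqrt_div_self']

theorem transpose_mul_self_inv_sqrt_two_smul {n : Type*} [Fintype n] (M : Matrix n n ℝ) :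
    ((√2)⁻¹ • M)ᵀ * ((√2)⁻¹ • M) = (2⁻¹ : ℝ) • (Mᵀ * M) := by
  rw [transpose_smul, Matrix.smul_mul, Matrix.mul_smul, smul_smul, ← mul_inv,
    Real.mul_self_sqrt zero_le_two]

theorem iota_umat_mem_orthogonalGroup (θ : ℝ) : iota (umat θ) ∈ orthogonalGroup (Fin 4) ℝ := by
  rw [mem_orthogonalGroup_iff', iota_umat, transpose_mul_self_inv_sqrt_two_smul]
  ext i j
  fin_cases i <;> fin_cases j <;> simp [mul_apply, Fin.sum_univ_four] <;>
    nlinarith [sin_sq_add_cos_sq θ]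

theorem sinhPart_Dmat_iota_umat (α θ : ℝ) :
    sinhPart (Dmat α 0 * iota (umat θ) * Dmat α 0) =
      (√2)⁻¹ • !![cos θ * sinh (2 * α), -sinh α, 0, 0;
                  sinh α, 0, 0, 0;
                  0, 0, -(cos θ * sinh (2 * α)), sinh α;
                  0, 0, -sinh α, 0] := by
  have hD : Dmat α 0 * Dmat (-α) 0 = 1 := by simpa using Dmat_mul_Dmat_neg α 0
  have hk := (mem_orthogonalGroup_iff' _ _).1 (iota_umat_mem_orthogonalGroup θ)
  have h : (Dmat α 0 * iota (umat θ) * Dmat α 0)ᵀ *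
      (Dmat (-α) 0 * iota (umat θ) * Dmat (-α) 0) = 1 := by
    simp only [transpose_mul, Dmat_transpose, Matrix.mul_assoc]
    rw [← Matrix.mul_assoc (Dmat α 0) (Dmat (-α) 0), hD, Matrix.one_mul,
      ← Matrix.mul_assoc (iota (umat θ))ᵀ, hk, Matrix.one_mul, hD]
  have hsinh2 : sinh (2 * α) = (exp α * exp α - exp (-α) * exp (-α)) / 2 := by
    rw [Real.sinh_eq, ← Real.exp_add, ← Real.exp_add]; ring_nf
  rw [sinhPart_eq_of_transpose_mul_eq_one h, iota_umat, hsinh2, Real.sinh_eq]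
  ext i j
  fin_cases i <;> fin_cases j <;> simp [Dmat, mul_apply, Fin.sum_univ_four] <;> ring

theorem det_sinhPart_Dmat_iota_umat (α θ : ℝ) :
    (sinhPart (Dmat α 0 * iota (umat θ) * Dmat α 0)).det = sinh α ^ 4 / 4 := by
  have h4 : √2 ^ 4 = 4 := by
    rw [show 4 = 2 * 2 from rfl, pow_mul, Real.sq_sqrt zero_le_two]; norm_num
  rw [sinhPart_Dmat_iota_umat, det_smul]
  simp [det_succ_row_zero, Fin.sum_univ_succ, Fin.succAbove, h4]
  ring

theorem trace_sinhPart_Dmat_iota_umat (α θ : ℝ) :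
    ((sinhPart (Dmat α 0 * iota (umat θ) * Dmat α 0))ᵀ *
        sinhPart (Dmat α 0 * iota (umat θ) * Dmat α 0)).trace
      = cos θ ^ 2 * sinh (2 * α) ^ 2 + 2 * sinh α ^ 2 := by
  rw [sinhPart_Dmat_iota_umat, transpose_mul_self_inv_sqrt_two_smul]
  simp [trace, mul_apply, Fin.sum_univ_four]
  ring

theorem det_sinhDiag (β γ : ℝ) : (sinhDiag β γ).det = sinh β ^ 2 * sinh γ ^ 2 := by
  simp [sinhDiag, det_diagonal, Fin.prod_univ_four]
  ring

theorem trace_sinhDiag (β γ : ℝ) :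
    ((sinhDiag β γ)ᵀ * sinhDiag β γ).trace = 2 * sinh β ^ 2 + 2 * sinh γ ^ 2 := by
  simp [sinhDiag, trace, Fin.sum_univ_four]
  ring

theorem mul_eq_and_sub_eq_of_sq_invariants {p q s t : ℝ} (hq : 0 ≤ q) (hqp : q ≤ p) (ht : 0 ≤ t)
    (hprod : (p ^ 2 * q ^ 2) ^ 2 = (s ^ 4 / 4) ^ 2) (hsum : p ^ 2 + q ^ 2 = t ^ 2 + s ^ 2) :
    p * q = s ^ 2 / 2 ∧ p - q = t := by
  have hpq : p * q = s ^ 2 / 2 :=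
    (pow_left_inj₀ (mul_nonneg (hq.trans hqp) hq) (by positivity) four_ne_zero).1
      (by linear_combination hprod)
  refine ⟨hpq, (pow_left_inj₀ (sub_nonneg.2 hqp) ht two_ne_zero).1 ?_⟩
  linear_combination hsum - 2 * hpq

/-- If X = D(α,0)·ι(u_θ)·D(α,0) has KAK decomposition X ∈ K·D(β,γ)·K with
β ≥ γ ≥ 0, then sinh β·sinh γ = (1/2)·sinh²α and
sinh β − sinh γ = (1/√2)·sinh(2α)·cos θ. -/
theorem structural_U1 (α θ β γ : ℝ) (hα : 0 < α)
    (hθ : θ ∈ Set.Icc (-(π / 2)) (π / 2)) (hβγ : γ ≤ β) (hγ : 0 ≤ γ)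
    (hKAK : ∃ k₁ ∈ Kgrp, ∃ k₂ ∈ Kgrp,
      Dmat α 0 * iota (umat θ) * Dmat α 0 = k₁ * Dmat β γ * k₂) :
    Real.sinh β * Real.sinh γ = (1 / 2) * Real.sinh α ^ 2 ∧
      Real.sinh β - Real.sinh γ = (1 / Real.sqrt 2) * Real.sinh (2 * α) * Real.cos θ := by
  obtain ⟨k₁, hk₁, k₂, hk₂, hX⟩ := hKAK
  replace hk₁ := Kgrp_subset_orthogonalGroup hk₁
  replace hk₂ := Kgrp_subset_orthogonalGroup hk₂
  have hS : sinhPart (Dmat α 0 * iota (umat θ) * Dmat α 0) = k₁ * sinhDiag β γ * k₂ := by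
    rw [hX, sinhPart_orthogonal_mul hk₁ hk₂ (isUnit_det_Dmat β γ), sinhPart_Dmat]
  have hdet := det_sq_orthogonal_mul hk₁ hk₂ (A := sinhDiag β γ)
  have htr := trace_transpose_mul_self_orthogonal hk₁ hk₂ (A := sinhDiag β γ)
  rw [← hS, det_sinhPart_Dmat_iota_umat, det_sinhDiag] at hdet
  rw [← hS, trace_sinhPart_Dmat_iota_umat, trace_sinhDiag] at htr
  have ht : 0 ≤ 1 / √2 * sinh (2 * α) * cos θ := by
    have := Real.sinh_nonneg_iff.2 (by positivity : 0 ≤ 2 * α)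
    have := Real.cos_nonneg_of_mem_Icc hθ
    positivity
  have ht_sq : (1 / √2 * sinh (2 * α) * cos θ) ^ 2 = cos θ ^ 2 * sinh (2 * α) ^ 2 / 2 := by
    rw [mul_pow, mul_pow, div_pow, Real.sq_sqrt zero_le_two]; ring
  obtain ⟨hprod, hdiff⟩ := mul_eq_and_sub_eq_of_sq_invariants (Real.sinh_nonneg_iff.2 hγ)
    (Real.sinh_le_sinh.2 hβγ) ht hdet.symm (by linear_combination -htr / 2 - ht_sq)
  exact ⟨by rw [hprod]; ring, hdiff⟩
end
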